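/- Let N ≤ N_R be positive integers and let p(t, a) = Σ_{n=0}^∞ A_n(a) Σ_{m=0}^n binom(n,m) (−1)^m t^{N+n−m−1} e^{−t}/(N+n−m−1)! for t > 0 and a ∈ ℝ. Then for every fixed t > 0 the function a ↦ p(t, a) is differentiable on ℝ, and for every t > 0 and a ∈ ℝ, a · ∂_a p(t, a) = − p(t, a) + (N − t − 2) · p^{(1)}(t, a) − t · p^{(2)}(t, a), where ∂_a denotes the partial derivative with respect to a. -/

import Mathlib

/-- Pochhammer symbol `(x)ₙ = x (x+1) ⋯ (x+n-1)`. -/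
noncomputable def poch (x : ℝ) (n : ℕ) : ℝ := ∏ i ∈ Finset.range n, (x + i)

/-- `A_n(a) = ((N)_n/(N_R)_n) aⁿ/n!`. -/
noncomputable def Acoef (N NR : ℕ) (a : ℝ) (n : ℕ) : ℝ :=
  (poch N n / poch NR n) * a ^ n / (n.factorial : ℝ)

/-- The (normalized) ZF SNR density
`p(t,a) = Σ_n A_n(a) Σ_{m=0}^n C(n,m) (−1)^m t^{N+n−m−1} e^{−t}/(N+n−m−1)!`. -/
noncomputable def pdfZF (N NR : ℕ) (t a : ℝ) : ℝ :=
  ∑' n : ℕ, Acoef N NR a n *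
    ∑ m ∈ Finset.range (n + 1),
      (n.choose m : ℝ) * (-1 : ℝ) ^ m * t ^ (N + n - m - 1) * Real.exp (-t)
        / ((N + n - m - 1).factorial : ℝ)

/-!
Write the inner sum of the `n`-th term as a binomial combination of the Erlang densities
`E_k(t) = tᵏ e⁻ᵗ / k!`. The operator `L = -1 + (N - t - 2) ∂ₜ - t ∂ₜ²` acts on them by
`L E_k = (k + 1 - N) (E_k - E_{k-1})`, and shifting the summation index with
`(m + 1) C(n, m + 1) = (n - m) C(n, m)` shows that `L` maps the `n`-th inner sum to `n` times
itself. Since `a ∂ₐ` also multiplies the `n`-th term by `n`, the equation holds termwise.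
Termwise differentiation is justified by `|A_n(a)| ≤ |a|ⁿ / n!` and the bound `4` on `t ≥ 0` for
the Erlang densities and their first two derivatives.
-/

open Finset Real
open scoped Nat

noncomputable section

def shiftDown (f : ℕ → ℝ → ℝ) : ℕ → ℝ → ℝ
  | 0 => fun _ => 0
  | k + 1 => f k

section ShiftDown

variable {f f' : ℕ → ℝ → ℝ} {t C : ℝ}

@[simp] lemma shiftDown_zero (f : ℕ → ℝ → ℝ) : shiftDown f 0 = fun _ => 0 := rfl

@[simp] lemma shiftDown_succ (f : ℕ → ℝ → ℝ) (k : ℕ) : shiftDown f (k + 1) = f k := rfl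

lemma hasDerivAt_shiftDown (hf : ∀ k, HasDerivAt (f k) (f' k t) t) (k : ℕ) :
    HasDerivAt (shiftDown f k) (shiftDown f' k t) t := by
  cases k with
  | zero => exact hasDerivAt_const t 0
  | succ k => exact hf k

lemma abs_shiftDown_le (hC : 0 ≤ C) (hf : ∀ k, |f k t| ≤ C) (k : ℕ) : |shiftDown f k t| ≤ C := by
  cases k with
  | zero => simpa using hC
  | succ k => exact hf k

end ShiftDown

def erlang (k : ℕ) (t : ℝ) : ℝ := t ^ k * exp (-t) / k !

def erlangDeriv : ℕ → ℝ → ℝ := shiftDown erlang - erlang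

def erlangDeriv2 : ℕ → ℝ → ℝ := shiftDown erlangDeriv - erlangDeriv

lemma hasDerivAt_erlang (k : ℕ) (t : ℝ) : HasDerivAt (erlang k) (erlangDeriv k t) t := by
  have hexp : HasDerivAt (fun t => exp (-t)) (-exp (-t)) t := by
    simpa using (hasDerivAt_neg t).exp
  refine (((hasDerivAt_pow k t).mul hexp).div_const (k ! : ℝ)).congr_deriv ?_
  cases k with
  | zero => simp [erlangDeriv, erlang]
  | succ k =>
    simp only [erlangDeriv, erlang, Pi.sub_apply, shiftDown_succ, Nat.factorial_succ]
    push_cast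
    field_simp
    ring

lemma hasDerivAt_erlangDeriv (k : ℕ) (t : ℝ) :
    HasDerivAt (erlangDeriv k) (erlangDeriv2 k t) t :=
  (hasDerivAt_shiftDown (fun j => hasDerivAt_erlang j t) k).sub (hasDerivAt_erlang k t)

lemma abs_erlang_le_one (k : ℕ) {t : ℝ} (ht : 0 ≤ t) : |erlang k t| ≤ 1 := by
  rw [abs_of_nonneg (by unfold erlang; positivity)]
  calc erlang k t = t ^ k / k ! * exp (-t) := by unfold erlang; ring
    _ ≤ exp t * exp (-t) := by gcongr; exact Real.pow_div_factorial_le_exp t ht k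
    _ = 1 := by rw [← exp_add, add_neg_cancel, exp_zero]

lemma abs_erlangDeriv_le (k : ℕ) {t : ℝ} (ht : 0 ≤ t) : |erlangDeriv k t| ≤ 2 :=
  calc |erlangDeriv k t| ≤ |shiftDown erlang k t| + |erlang k t| := abs_sub _ _
    _ ≤ 1 + 1 := add_le_add (abs_shiftDown_le zero_le_one (abs_erlang_le_one · ht) k)
        (abs_erlang_le_one k ht)
    _ = 2 := by norm_num

lemma abs_erlangDeriv2_le (k : ℕ) {t : ℝ} (ht : 0 ≤ t) : |erlangDeriv2 k t| ≤ 4 :=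
  calc |erlangDeriv2 k t| ≤ |shiftDown erlangDeriv k t| + |erlangDeriv k t| := abs_sub _ _
    _ ≤ 2 + 2 := add_le_add (abs_shiftDown_le zero_le_two (abs_erlangDeriv_le · ht) k)
        (abs_erlangDeriv_le k ht)
    _ = 4 := by norm_num

lemma mul_erlang (k : ℕ) (t : ℝ) : t * erlang k t = (k + 1) * erlang (k + 1) t := by
  simp only [erlang, Nat.factorial_succ]
  push_cast
  field_simp
  ring

lemma erlang_ode (k : ℕ) (c t : ℝ) :
    -erlang k t + (c - t - 2) * erlangDeriv k t - t * erlangDeriv2 k t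
      = (k + 1 - c) * (erlang k t - shiftDown erlang k t) := by
  match k with
  | 0 => simp only [erlangDeriv2, erlangDeriv, Pi.sub_apply, shiftDown_zero]; push_cast; ring
  | 1 =>
    simp only [erlangDeriv2, erlangDeriv, Pi.sub_apply, shiftDown_zero, shiftDown_succ]
    push_cast
    linear_combination mul_erlang 0 t
  | k + 2 =>
    simp only [erlangDeriv2, erlangDeriv, Pi.sub_apply, shiftDown_succ]
    have h := mul_erlang (k + 1) t
    push_cast at h ⊢
    linear_combination h - mul_erlang k t

lemma sum_choose_neg_one_pow_mul_shift_eq_zero {R : Type*} [CommRing R] (n : ℕ) (g : ℕ → R) :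
    ∑ m ∈ range (n + 1), (n.choose m : R) * (-1) ^ m * (m * g m + (n - m) * g (m + 1)) = 0 := by
  set h : ℕ → R := fun m => (n.choose m : R) * (-1) ^ m * m * g m
  have hstep : ∀ m ∈ range (n + 1),
      (n.choose m : R) * (-1) ^ m * (m * g m + (n - m) * g (m + 1)) = h m - h (m + 1) := by
    intro m hm
    have hchoose : (n.choose (m + 1) : R) * (m + 1) = n.choose m * (n - m) := by
      have := congrArg (Nat.cast : ℕ → R) (Nat.choose_succ_right_eq n m)
      push_cast [Nat.cast_sub (Nat.lt_succ_iff.mp (mem_range.mp hm))] at this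
      exact this
    simp only [h, pow_succ]
    push_cast
    linear_combination -((-1 : R) ^ m * g (m + 1)) * hchoose
  rw [sum_congr rfl hstep, sum_range_sub']
  simp [h]

/-- The `n`-th forward difference of `f` at `N - 1`. -/
def binomDiff (N n : ℕ) (f : ℕ → ℝ) : ℝ :=
  ∑ m ∈ range (n + 1), (n.choose m : ℝ) * (-1) ^ m * f (N + n - m - 1)

lemma abs_binomDiff_le (N n : ℕ) {f : ℕ → ℝ} {C : ℝ} (hf : ∀ k, |f k| ≤ C) :
    |binomDiff N n f| ≤ 2 ^ n * C :=
  calc |binomDiff N n f|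
      ≤ ∑ m ∈ range (n + 1), |(n.choose m : ℝ) * (-1) ^ m * f (N + n - m - 1)| :=
        abs_sum_le_sum_abs _ _
    _ ≤ ∑ m ∈ range (n + 1), (n.choose m : ℝ) * C := by
        gcongr with m
        simpa [abs_mul] using mul_le_mul_of_nonneg_left (hf _) (Nat.cast_nonneg (n.choose m))
    _ = 2 ^ n * C := by rw [← sum_mul, ← Nat.cast_sum, Nat.sum_range_choose]; push_cast; ring

lemma hasDerivAt_binomDiff (N n : ℕ) {F F' : ℕ → ℝ → ℝ} {t : ℝ}
    (hF : ∀ k, HasDerivAt (F k) (F' k t) t) :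
    HasDerivAt (fun t => binomDiff N n (F · t)) (binomDiff N n (F' · t)) t :=
  HasDerivAt.fun_sum fun _ _ => (hF _).const_mul _

lemma binomDiff_erlang_ode {N : ℕ} (hN : 0 < N) (n : ℕ) (t : ℝ) :
    -binomDiff N n (erlang · t) + (N - t - 2) * binomDiff N n (erlangDeriv · t)
        - t * binomDiff N n (erlangDeriv2 · t)
      = n * binomDiff N n (erlang · t) := by
  set g : ℕ → ℝ := fun m => erlang (N + n - m - 1) t
  have hterm : ∀ m ∈ range (n + 1),
      -erlang (N + n - m - 1) t + (N - t - 2) * erlangDeriv (N + n - m - 1) t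
          - t * erlangDeriv2 (N + n - m - 1) t
        = n * g m - (m * g m + (n - m) * g (m + 1)) := by
    intro m hm
    have hmn : m ≤ n := Nat.lt_succ_iff.mp (mem_range.mp hm)
    rw [erlang_ode]
    rcases hmn.lt_or_eq with hlt | rfl
    · obtain ⟨k, hk⟩ : ∃ k, N + n - m - 1 = k + 1 := ⟨N + n - m - 2, by omega⟩
      have hk' : N + n - (m + 1) - 1 = k := by omega
      have hcast : (k : ℝ) + 2 + m = N + n := by exact_mod_cast (by omega : k + 2 + m = N + n)
      simp only [g, hk, hk', shiftDown_succ]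
      push_cast
      linear_combination (erlang (k + 1) t - erlang k t) * hcast
    · simp only [g, Nat.add_sub_cancel, Nat.cast_sub (show 1 ≤ N from hN)]
      push_cast
      ring
  rw [← sub_eq_zero, ← neg_zero, ← sum_choose_neg_one_pow_mul_shift_eq_zero n g]
  simp only [binomDiff, mul_sum, ← sum_neg_distrib, ← sum_add_distrib, ← sum_sub_distrib]
  refine sum_congr rfl fun m hm => ?_
  linear_combination (n.choose m : ℝ) * (-1) ^ m * hterm m hm

lemma Acoef_eq_mul_pow (N NR : ℕ) (a : ℝ) (n : ℕ) : Acoef N NR a n = Acoef N NR 1 n * a ^ n := by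
  simp only [Acoef, one_pow]
  ring

lemma abs_Acoef_le {N NR : ℕ} (h : N ≤ NR) (a : ℝ) (n : ℕ) : |Acoef N NR a n| ≤ |a| ^ n / n ! := by
  have hpoch : 0 ≤ poch N n ∧ poch N n ≤ poch NR n :=
    ⟨prod_nonneg fun i _ => by positivity,
      prod_le_prod (fun i _ => by positivity) fun i _ => by gcongr⟩
  have hratio : |poch N n / poch NR n| ≤ 1 := by
    rw [abs_of_nonneg (div_nonneg hpoch.1 (hpoch.1.trans hpoch.2))]
    exact div_le_one_of_le₀ hpoch.2 (hpoch.1.trans hpoch.2)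
  rw [Acoef, abs_div, abs_mul, abs_pow, Nat.abs_cast]
  gcongr
  exact mul_le_of_le_one_left (by positivity) hratio

lemma summable_Acoef_mul {N NR : ℕ} (h : N ≤ NR) (a : ℝ) {b : ℕ → ℝ} {C : ℝ}
    (hb : ∀ n, |b n| ≤ 2 ^ n * C) : Summable fun n => Acoef N NR a n * b n := by
  refine .of_norm_bounded ((summable_pow_div_factorial (2 * |a|)).mul_left C) fun n => ?_
  calc ‖Acoef N NR a n * b n‖ = |Acoef N NR a n| * |b n| := by rw [norm_eq_abs, abs_mul]
    _ ≤ |a| ^ n / n ! * (2 ^ n * C) :=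
        mul_le_mul (abs_Acoef_le h a n) (hb n) (abs_nonneg _) (by positivity)
    _ = C * ((2 * |a|) ^ n / n !) := by ring

lemma hasDerivAt_tsum_Acoef_mul_binomDiff {N NR : ℕ} (h : N ≤ NR) (a : ℝ)
    {F F' : ℕ → ℝ → ℝ} {C C' : ℝ} (hF : ∀ k y, HasDerivAt (F k) (F' k y) y)
    (hFC : ∀ k y, 0 ≤ y → |F k y| ≤ C) (hF'C : ∀ k y, 0 ≤ y → |F' k y| ≤ C') {t : ℝ} (ht : 0 < t) :
    HasDerivAt (fun t => ∑' n, Acoef N NR a n * binomDiff N n (F · t))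
      (∑' n, Acoef N NR a n * binomDiff N n (F' · t)) t := by
  refine hasDerivAt_tsum_of_isPreconnected
    (g := fun n t => Acoef N NR a n * binomDiff N n (F · t))
    (g' := fun n t => Acoef N NR a n * binomDiff N n (F' · t))
    ((summable_pow_div_factorial (2 * |a|)).mul_left C') isOpen_Ioi (convex_Ioi 0).isPreconnected
    (fun n y _ => (hasDerivAt_binomDiff N n fun k => hF k y).const_mul _) (fun n y hy => ?_) ht
    (summable_Acoef_mul h a fun n => abs_binomDiff_le N n fun k => hFC k t ht.le) ht
  calc ‖Acoef N NR a n * binomDiff N n (F' · y)‖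
      = |Acoef N NR a n| * |binomDiff N n (F' · y)| := by rw [norm_eq_abs, abs_mul]
    _ ≤ |a| ^ n / n ! * (2 ^ n * C') :=
        mul_le_mul (abs_Acoef_le h a n) (abs_binomDiff_le N n fun k => hF'C k y (le_of_lt hy))
          (abs_nonneg _) (by positivity)
    _ = C' * ((2 * |a|) ^ n / n !) := by ring

lemma hasDerivAt_tsum_mul_pow {c : ℕ → ℝ} {R : ℝ} (hc : ∀ n, |c n| ≤ R ^ n / n !) (x : ℝ) :
    HasDerivAt (fun x => ∑' n, c n * x ^ n) (∑' n, c n * (n * x ^ (n - 1))) x := by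
  set r := |x| + 1
  have hr : 1 ≤ r := le_add_of_nonneg_left (abs_nonneg x)
  have hx : x ∈ Metric.ball (0 : ℝ) r := by
    rw [Metric.mem_ball, dist_zero_right, norm_eq_abs]
    exact lt_add_one _
  refine hasDerivAt_tsum_of_isPreconnected (g := fun n x => c n * x ^ n)
    (g' := fun n x => c n * (n * x ^ (n - 1))) (summable_pow_div_factorial (2 * R * r))
    Metric.isOpen_ball (convex_ball 0 r).isPreconnected
    (fun n y _ => (hasDerivAt_pow n y).const_mul _) (fun n y hy => ?_) hx
    (.of_norm_bounded (summable_pow_div_factorial (R * r)) fun n => ?_) hx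
  · have hy : |y| ≤ r := by
      rw [Metric.mem_ball, dist_zero_right, norm_eq_abs] at hy
      exact hy.le
    have hpow : (n : ℝ) * |y| ^ (n - 1) ≤ 2 ^ n * r ^ n := by
      gcongr
      · exact_mod_cast n.lt_two_pow_self.le
      · exact (pow_le_pow_left₀ (abs_nonneg y) hy _).trans (pow_le_pow_right₀ hr (n.sub_le 1))
    calc ‖c n * (n * y ^ (n - 1))‖ = |c n| * (n * |y| ^ (n - 1)) := by
          rw [norm_eq_abs, abs_mul, abs_mul, abs_pow, Nat.abs_cast]
      _ ≤ R ^ n / n ! * (2 ^ n * r ^ n) :=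
          mul_le_mul (hc n) hpow (by positivity) ((abs_nonneg _).trans (hc n))
      _ = (2 * R * r) ^ n / n ! := by rw [mul_pow, mul_pow]; ring
  · calc ‖c n * x ^ n‖ = |c n| * |x| ^ n := by rw [norm_eq_abs, abs_mul, abs_pow]
      _ ≤ R ^ n / n ! * r ^ n :=
          mul_le_mul (hc n) (pow_le_pow_left₀ (abs_nonneg x) (le_add_of_nonneg_right zero_le_one) n)
            (by positivity) ((abs_nonneg _).trans (hc n))
      _ = (R * r) ^ n / n ! := by rw [mul_pow]; ring

lemma pdfZF_eq_tsum (N NR : ℕ) (t a : ℝ) :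
    pdfZF N NR t a = ∑' n, Acoef N NR a n * binomDiff N n (erlang · t) := by
  refine tsum_congr fun n => ?_
  simp only [binomDiff, erlang]
  congr 1
  refine sum_congr rfl fun m _ => ?_
  ring

lemma hasDerivAt_pdfZF_a {N NR : ℕ} (h : N ≤ NR) {t : ℝ} (ht : 0 ≤ t) (a : ℝ) :
    HasDerivAt (pdfZF N NR t)
      (∑' n, Acoef N NR 1 n * binomDiff N n (erlang · t) * (n * a ^ (n - 1))) a := by
  have hseries :
      pdfZF N NR t = fun a => ∑' n, Acoef N NR 1 n * binomDiff N n (erlang · t) * a ^ n :=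
    funext fun a => by
      rw [pdfZF_eq_tsum]
      exact tsum_congr fun n => by rw [Acoef_eq_mul_pow]; ring
  rw [hseries]
  refine hasDerivAt_tsum_mul_pow (R := 2) (fun n => ?_) a
  calc |Acoef N NR 1 n * binomDiff N n (erlang · t)|
      = |Acoef N NR 1 n| * |binomDiff N n (erlang · t)| := abs_mul _ _
    _ ≤ |1| ^ n / n ! * (2 ^ n * 1) :=
        mul_le_mul (abs_Acoef_le h 1 n) (abs_binomDiff_le N n fun k => abs_erlang_le_one k ht)
          (abs_nonneg _) (by positivity)
    _ = 2 ^ n / n ! := by rw [abs_one, one_pow, mul_one, one_div_mul_eq_div]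

lemma hasDerivAt_pdfZF_t {N NR : ℕ} (h : N ≤ NR) (a : ℝ) {t : ℝ} (ht : 0 < t) :
    HasDerivAt (fun t => pdfZF N NR t a)
      (∑' n, Acoef N NR a n * binomDiff N n (erlangDeriv · t)) t := by
  simp only [pdfZF_eq_tsum]
  exact hasDerivAt_tsum_Acoef_mul_binomDiff h a hasDerivAt_erlang
    (fun k _ hy => abs_erlang_le_one k hy) (fun k _ hy => abs_erlangDeriv_le k hy) ht

lemma hasDerivAt_deriv_pdfZF_t {N NR : ℕ} (h : N ≤ NR) (a : ℝ) {t : ℝ} (ht : 0 < t) :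
    HasDerivAt (deriv fun t => pdfZF N NR t a)
      (∑' n, Acoef N NR a n * binomDiff N n (erlangDeriv2 · t)) t :=
  (hasDerivAt_tsum_Acoef_mul_binomDiff h a hasDerivAt_erlangDeriv
      (fun k _ hy => abs_erlangDeriv_le k hy) (fun k _ hy => abs_erlangDeriv2_le k hy)
      ht).congr_of_eventuallyEq
    (Filter.eventually_of_mem (Ioi_mem_nhds ht) fun _ hy => (hasDerivAt_pdfZF_t h a hy).deriv)

end

/-- For fixed `t > 0` the map `a ↦ p(t,a)` is differentiable on `ℝ`, and
`a ∂_a p(t,a) = −p(t,a) + (N − t − 2) p⁽¹⁾(t,a) − t p⁽²⁾(t,a)`,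
where `p⁽¹⁾, p⁽²⁾` are partial derivatives with respect to `t`. -/
theorem stmt11 (N NR : ℕ) (hN : 0 < N) (hNNR : N ≤ NR) :
    (∀ t : ℝ, 0 < t → Differentiable ℝ (fun a => pdfZF N NR t a)) ∧
    ∀ t : ℝ, 0 < t → ∀ a : ℝ,
      a * deriv (fun a' => pdfZF N NR t a') a =
        -pdfZF N NR t a
          + ((N : ℝ) - t - 2) * deriv (fun t' => pdfZF N NR t' a) t
          - t * iteratedDeriv 2 (fun t' => pdfZF N NR t' a) t := by
  refine ⟨fun t ht a => (hasDerivAt_pdfZF_a hNNR ht.le a).differentiableAt, fun t ht a => ?_⟩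
  rw [(hasDerivAt_pdfZF_a hNNR ht.le a).deriv, (hasDerivAt_pdfZF_t hNNR a ht).deriv,
    iteratedDeriv_succ, iteratedDeriv_one, (hasDerivAt_deriv_pdfZF_t hNNR a ht).deriv,
    pdfZF_eq_tsum]
  have hsum {F : ℕ → ℝ → ℝ} {C : ℝ} (hF : ∀ k, |F k t| ≤ C) :=
    (summable_Acoef_mul hNNR a fun n => abs_binomDiff_le N n hF).hasSum
  have hrhs := ((hsum (abs_erlang_le_one · ht.le)).neg.add
    ((hsum (abs_erlangDeriv_le · ht.le)).mul_left (N - t - 2))).sub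
    ((hsum (abs_erlangDeriv2_le · ht.le)).mul_left t)
  rw [← hrhs.tsum_eq, ← tsum_mul_left]
  refine tsum_congr fun n => ?_
  have hpow : a * (n * a ^ (n - 1)) = n * a ^ n := by
    rcases n with _ | n
    · simp
    · rw [Nat.add_sub_cancel, pow_succ]; ring
  rw [Acoef_eq_mul_pow N NR a n]
  linear_combination -(Acoef N NR 1 n * a ^ n) * binomDiff_erlang_ode hN n t
    + Acoef N NR 1 n * binomDiff N n (erlang · t) * hpow
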